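/- For 0 ≤ σ ≤ v with v² − σ² ≤ 1, the Lévy distance between the normal laws N(0,σ²) and N(0,v²) satisfies L(Φ_σ, Φ_v)² ≤ (v² − σ²) · log(2/(v² − σ²)). -/

import Mathlib

open Real MeasureTheory Set

noncomputable def stdGaussianDensity (t : ℝ) : ℝ :=
  (Real.sqrt (2 * Real.pi))⁻¹ * Real.exp (-t ^ 2 / 2)

noncomputable def stdNormalCDF (x : ℝ) : ℝ :=
  ∫ t in Set.Iic x, stdGaussianDensity t

/-- Distribution function of N(0,σ²); for σ = 0 this is the distribution function
of the unit mass at the origin (Heaviside function, right-continuous). -/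
noncomputable def normalCDF (σ : ℝ) (x : ℝ) : ℝ :=
  if σ = 0 then (if x < 0 then 0 else 1) else stdNormalCDF (x / σ)

/-- Lévy distance between two distribution functions. -/
noncomputable def levyDist (F G : ℝ → ℝ) : ℝ :=
  sInf {h : ℝ | 0 ≤ h ∧ ∀ x : ℝ, G (x - h) - h ≤ F x ∧ F x ≤ G (x + h) + h}

/-! With `t = v² - σ²` and `ε = √(t log (2/t))` we check the defining sandwich of the Lévy distance
at every `x`. Where `x / σ` and `(x ± ε) / v` lie in the right order, monotonicity of `Φ` suffices.
Otherwise, since `(v - σ)² ≤ t`, the point `|x ± ε| / v` lies beyond `√(log (2/t))`, and the tail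
bound `1 - Φ(y) ≤ e^{-y²/2} / 2 ≤ √(t/8) ≤ ε` closes the gap, both distribution functions taking
values in `[0, 1]`. -/

section Levy

variable {F G : ℝ → ℝ}

lemma levyDist_nonneg : 0 ≤ levyDist F G :=
  Real.sInf_nonneg fun _ h => h.1

lemma levyDist_le {ε : ℝ} (hε : 0 ≤ ε)
    (h : ∀ x, G (x - ε) - ε ≤ F x ∧ F x ≤ G (x + ε) + ε) : levyDist F G ≤ ε :=
  csInf_le ⟨0, fun _ h => h.1⟩ ⟨hε, h⟩

lemma levyDist_self : levyDist F F = 0 :=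
  le_antisymm (levyDist_le le_rfl fun x => by simp) levyDist_nonneg

end Levy

section StdNormal

open ProbabilityTheory

lemma stdGaussianDensity_eq_gaussianPDFReal : stdGaussianDensity = gaussianPDFReal 0 1 := by
  ext t
  simp [stdGaussianDensity, gaussianPDFReal]

lemma stdGaussianDensity_nonneg (t : ℝ) : 0 ≤ stdGaussianDensity t := by
  unfold stdGaussianDensity
  positivity

lemma integrable_stdGaussianDensity : Integrable stdGaussianDensity := by
  rw [stdGaussianDensity_eq_gaussianPDFReal]
  exact integrable_gaussianPDFReal 0 1

lemma stdNormalCDF_add_integral_Ioi (x : ℝ) :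
    stdNormalCDF x + ∫ t in Ioi x, stdGaussianDensity t = 1 := by
  rw [stdNormalCDF, ← compl_Iic, integral_add_compl measurableSet_Iic integrable_stdGaussianDensity,
    stdGaussianDensity_eq_gaussianPDFReal,
    integral_gaussianPDFReal_eq_one 0 one_ne_zero]

lemma stdNormalCDF_mono : Monotone stdNormalCDF := fun _ _ hab =>
  setIntegral_mono_set integrable_stdGaussianDensity.integrableOn
    (.of_forall stdGaussianDensity_nonneg) (Iic_subset_Iic.mpr hab).eventuallyLE

lemma stdNormalCDF_nonneg (x : ℝ) : 0 ≤ stdNormalCDF x :=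
  setIntegral_nonneg measurableSet_Iic fun t _ => stdGaussianDensity_nonneg t

lemma stdNormalCDF_le_one (x : ℝ) : stdNormalCDF x ≤ 1 := by
  have := setIntegral_nonneg (μ := volume) measurableSet_Ioi fun t (_ : t ∈ Ioi x) =>
    stdGaussianDensity_nonneg t
  linarith [stdNormalCDF_add_integral_Ioi x]

lemma stdNormalCDF_neg (x : ℝ) : stdNormalCDF (-x) = 1 - stdNormalCDF x := by
  have h : stdNormalCDF (-x) = ∫ t in Ioi x, stdGaussianDensity t := by
    rw [stdNormalCDF, ← integral_comp_neg_Ioi]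
    simp [stdGaussianDensity]
  linarith [stdNormalCDF_add_integral_Ioi x]

lemma integral_Ioi_zero_stdGaussianDensity : ∫ t in Ioi (0 : ℝ), stdGaussianDensity t = 1 / 2 := by
  have := stdNormalCDF_neg 0
  rw [neg_zero] at this
  linarith [stdNormalCDF_add_integral_Ioi 0]

lemma integral_Ioi_stdGaussianDensity_eq (y : ℝ) :
    ∫ t in Ioi y, stdGaussianDensity t = ∫ t in Ioi (0 : ℝ), stdGaussianDensity (t + y) := by
  rw [← (measurePreserving_add_right volume y).setIntegral_preimage_emb
    (measurableEmbedding_addRight y), preimage_add_const_Ioi, sub_self]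

lemma one_sub_stdNormalCDF_le {y : ℝ} (hy : 0 ≤ y) :
    1 - stdNormalCDF y ≤ exp (-y ^ 2 / 2) / 2 := by
  -- `(t + y)² ≥ t² + y²` for `t, y ≥ 0`
  have hshift : ∀ t ∈ Ioi (0 : ℝ),
      stdGaussianDensity (t + y) ≤ exp (-y ^ 2 / 2) * stdGaussianDensity t := by
    intro t ht
    rw [stdGaussianDensity, stdGaussianDensity, mul_left_comm, ← exp_add]
    gcongr
    nlinarith [mul_nonneg (le_of_lt ht) hy]
  have htail : ∫ t in Ioi y, stdGaussianDensity t ≤ exp (-y ^ 2 / 2) / 2 :=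
    calc ∫ t in Ioi y, stdGaussianDensity t
        = ∫ t in Ioi (0 : ℝ), stdGaussianDensity (t + y) := integral_Ioi_stdGaussianDensity_eq y
      _ ≤ ∫ t in Ioi (0 : ℝ), exp (-y ^ 2 / 2) * stdGaussianDensity t :=
          setIntegral_mono_on (integrable_stdGaussianDensity.comp_add_right y).integrableOn
            (integrable_stdGaussianDensity.const_mul _).integrableOn measurableSet_Ioi hshift
      _ = exp (-y ^ 2 / 2) / 2 := by
          rw [integral_const_mul, integral_Ioi_zero_stdGaussianDensity]
          ring
  linarith [stdNormalCDF_add_integral_Ioi y]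

lemma log_two_le_log_two_div {t : ℝ} (ht : 0 < t) (ht1 : t ≤ 1) : log 2 ≤ log (2 / t) :=
  log_le_log two_pos (le_div_self zero_le_two ht ht1)

lemma one_sub_stdNormalCDF_le_sqrt_mul_log {t y : ℝ} (ht : 0 < t) (ht1 : t ≤ 1) (hy : 0 ≤ y)
    (hy2 : log (2 / t) ≤ y ^ 2) : 1 - stdNormalCDF y ≤ √(t * log (2 / t)) := by
  have hlog : 1 / 8 ≤ log (2 / t) := by
    linarith [log_two_le_log_two_div ht ht1, log_two_gt_d9]
  have hexp : exp (-y ^ 2) ≤ t / 2 :=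
    calc exp (-y ^ 2) ≤ exp (-log (2 / t)) := exp_le_exp.mpr (neg_le_neg hy2)
      _ = t / 2 := by rw [exp_neg, exp_log (by positivity), inv_div]
  refine (one_sub_stdNormalCDF_le hy).trans ((le_sqrt (by positivity) (by positivity)).mpr ?_)
  calc (exp (-y ^ 2 / 2) / 2) ^ 2 = exp (-y ^ 2) / 4 := by
        rw [div_pow, ← exp_nat_mul]
        ring_nf
    _ ≤ t * log (2 / t) := by nlinarith

end StdNormal

section NormalCDF

lemma normalCDF_zero (x : ℝ) : normalCDF 0 x = if x < 0 then 0 else 1 :=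
  if_pos rfl

lemma normalCDF_of_pos {v : ℝ} (hv : 0 < v) (x : ℝ) : normalCDF v x = stdNormalCDF (x / v) :=
  if_neg hv.ne'

lemma normalCDF_nonneg (σ x : ℝ) : 0 ≤ normalCDF σ x := by
  unfold normalCDF
  split_ifs <;> simp [stdNormalCDF_nonneg]

lemma normalCDF_le_one (σ x : ℝ) : normalCDF σ x ≤ 1 := by
  unfold normalCDF
  split_ifs <;> simp [stdNormalCDF_le_one]

variable {σ v : ℝ}

lemma normalCDF_le_normalCDF_of_mul_lt (hσ : 0 ≤ σ) (hv : 0 < v) {x a : ℝ}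
    (h : x * v < a * σ) : normalCDF σ x ≤ normalCDF v a := by
  rcases hσ.eq_or_lt with rfl | hσ
  · have hx : x < 0 := by nlinarith
    rw [normalCDF_zero, if_pos hx]
    exact normalCDF_nonneg v a
  · rw [normalCDF_of_pos hσ, normalCDF_of_pos hv]
    exact stdNormalCDF_mono ((div_le_div_iff₀ hσ hv).mpr h.le)

lemma normalCDF_le_normalCDF_of_mul_le (hσ : 0 ≤ σ) (hv : 0 < v) {x b : ℝ}
    (h : b * σ ≤ x * v) : normalCDF v b ≤ normalCDF σ x := by
  rcases hσ.eq_or_lt with rfl | hσ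
  · have hx : ¬x < 0 := by nlinarith
    rw [normalCDF_zero, if_neg hx]
    exact normalCDF_le_one v b
  · rw [normalCDF_of_pos hσ, normalCDF_of_pos hv]
    exact stdNormalCDF_mono ((div_le_div_iff₀ hv hσ).mpr h)

lemma normalCDF_neg (hv : 0 < v) (x : ℝ) : normalCDF v (-x) = 1 - normalCDF v x := by
  rw [normalCDF_of_pos hv, normalCDF_of_pos hv, neg_div, stdNormalCDF_neg]

variable (σ v) in
noncomputable def levyBound : ℝ :=
  √((v ^ 2 - σ ^ 2) * log (2 / (v ^ 2 - σ ^ 2)))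

lemma levyBound_nonneg : 0 ≤ levyBound σ v :=
  sqrt_nonneg _

variable (hσ : 0 ≤ σ) (hσv : σ < v) (h1 : v ^ 2 - σ ^ 2 ≤ 1)
include hσ hσv h1

-- `a / v ≥ ε / (v - σ) ≥ √(log (2/t))`, because `(v - σ)² ≤ t`.
lemma one_sub_normalCDF_le_levyBound {a : ℝ} (ha : levyBound σ v * v ≤ a * (v - σ)) :
    1 - normalCDF v a ≤ levyBound σ v := by
  rw [levyBound] at *
  set t := v ^ 2 - σ ^ 2
  set ε := √(t * log (2 / t))
  have hv : 0 < v := hσ.trans_lt hσv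
  have ht : 0 < t := by nlinarith
  have hlog : 0 < log (2 / t) := (log_pos one_lt_two).trans_le (log_two_le_log_two_div ht h1)
  have hε : ε ^ 2 = t * log (2 / t) := sq_sqrt (by positivity)
  have hvσ : (v - σ) ^ 2 ≤ t := by nlinarith
  have ha0 : 0 ≤ a := nonneg_of_mul_nonneg_left ((by positivity : 0 ≤ ε * v).trans ha) (by linarith)
  have hsq : log (2 / t) ≤ (a / v) ^ 2 := by
    rw [div_pow, le_div_iff₀ (by positivity)]
    have : (ε * v) ^ 2 ≤ (a * (v - σ)) ^ 2 := pow_le_pow_left₀ (by positivity) ha 2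
    nlinarith [sq_nonneg a]
  rw [normalCDF_of_pos hv]
  exact one_sub_stdNormalCDF_le_sqrt_mul_log ht h1 (by positivity) hsq

lemma normalCDF_sub_levyBound_le (x : ℝ) :
    normalCDF v (x - levyBound σ v) - levyBound σ v ≤ normalCDF σ x := by
  have hv : 0 < v := hσ.trans_lt hσv
  by_cases h : (x - levyBound σ v) * σ ≤ x * v
  · linarith [normalCDF_le_normalCDF_of_mul_le hσ hv h, levyBound_nonneg (σ := σ) (v := v)]
  · have htail := one_sub_normalCDF_le_levyBound hσ hσv h1 (a := levyBound σ v - x) (by linarith)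
    rw [← neg_sub (levyBound σ v) x, normalCDF_neg hv]
    linarith [normalCDF_nonneg σ x]

lemma normalCDF_le_add_levyBound (x : ℝ) :
    normalCDF σ x ≤ normalCDF v (x + levyBound σ v) + levyBound σ v := by
  have hv : 0 < v := hσ.trans_lt hσv
  by_cases h : x * v < (x + levyBound σ v) * σ
  · linarith [normalCDF_le_normalCDF_of_mul_lt hσ hv h, levyBound_nonneg (σ := σ) (v := v)]
  · have htail := one_sub_normalCDF_le_levyBound hσ hσv h1 (a := x + levyBound σ v) (by linarith)
    linarith [normalCDF_le_one σ x]

lemma levyBound_sq : levyBound σ v ^ 2 = (v ^ 2 - σ ^ 2) * log (2 / (v ^ 2 - σ ^ 2)) := by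
  have ht : 0 < v ^ 2 - σ ^ 2 := by nlinarith
  have hlog := (log_pos one_lt_two).trans_le (log_two_le_log_two_div ht h1)
  exact sq_sqrt (by positivity)

end NormalCDF

theorem stmt_6 (σ v : ℝ) (h0 : 0 ≤ σ) (hσv : σ ≤ v) (h1 : v ^ 2 - σ ^ 2 ≤ 1) :
    levyDist (normalCDF σ) (normalCDF v) ^ 2
      ≤ (v ^ 2 - σ ^ 2) * Real.log (2 / (v ^ 2 - σ ^ 2)) := by
  obtain rfl | hlt := hσv.eq_or_lt
  · simp [levyDist_self]
  have hle : levyDist (normalCDF σ) (normalCDF v) ≤ levyBound σ v :=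
    levyDist_le levyBound_nonneg fun x =>
      ⟨normalCDF_sub_levyBound_le h0 hlt h1 x, normalCDF_le_add_levyBound h0 hlt h1 x⟩
  rw [← levyBound_sq h0 hlt h1]
  exact pow_le_pow_left₀ levyDist_nonneg hle 2
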